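/- arXiv:1705.00796 — 2 statements merged into one kernel-verified Lean document; each statement's English description precedes it below -/
import Mathlib

section
/- Let $1\le r<\infty$ and $\kappa>0$. Define $\Phi_\kappa(t):=t^{\kappa-1}(\log(t+1/t))^{-1}$ for $t>0$ and $\Psi_\kappa(t):=\int_0^t \Phi_\kappa(s^{1/r})^r\,ds$ for $t>0$. Then there exists a constant $C>0$ such that for every non-negative sequence $\{a_j\}_{j=0}^\infty$ with $\sum_j a_j^r<\infty$ and some $a_j>0$, one has $\sum_{j=0}^\infty \left[a_j\,\Phi_\kappa\left(\left(\sum_{k=0}^j a_k^r\right)^{1/r}\right)\right]^r \le C\,\Psi_\kappa\left(\sum_{j=0}^\infty a_j^r\right)$. -/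
open scoped ENNReal

/-- `Φ_κ(t) = t^{κ-1} (log(t + 1/t))⁻¹` for `t > 0`. -/
noncomputable def Phi (κ t : ℝ) : ℝ := t ^ (κ - 1) * (Real.log (t + 1 / t))⁻¹

/-- `Ψ_κ(t) = ∫_0^t Φ_κ(s^{1/r})^r ds`, with
`Φ_κ(s^{1/r})^r = s^{κ-1} (log(s^{1/r} + s^{-1/r}))^{-r}`. -/
noncomputable def Psi (r κ t : ℝ) : ℝ :=
  ∫ s in (0:ℝ)..t, s ^ (κ - 1) * (Real.log (s ^ (1 / r) + s ^ (-(1 / r))))⁻¹ ^ r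

open MeasureTheory

/-- The integrand of `Psi`. -/
noncomputable def fIng (r κ : ℝ) (s : ℝ) : ℝ :=
  s ^ (κ - 1) * (Real.log (s ^ (1 / r) + s ^ (-(1 / r))))⁻¹ ^ r

lemma two_le_add_inv {x : ℝ} (hx : 0 < x) : 2 ≤ x + x⁻¹ := by
  have h1 : (2 - x) * x ≤ 1 := by nlinarith [sq_nonneg (x - 1)]
  have h2 : 2 - x ≤ x⁻¹ := by
    rw [← one_div]
    exact (le_div_iff₀ hx).mpr h1
  linarith

lemma ell_ge_log2 {r : ℝ} (hr : 1 ≤ r) {s : ℝ} (hs : 0 < s) :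
    Real.log 2 ≤ Real.log (s ^ (1 / r) + s ^ (-(1 / r))) := by
  have hx : 0 < s ^ (1 / r) := Real.rpow_pos_of_pos hs _
  have hneg : s ^ (-(1 / r)) = (s ^ (1 / r))⁻¹ := Real.rpow_neg hs.le _
  rw [hneg]
  exact Real.log_le_log two_pos (two_le_add_inv hx)

lemma ell_ge_abs {r : ℝ} (hr : 1 ≤ r) {s : ℝ} (hs : 0 < s) :
    |Real.log s| / r ≤ Real.log (s ^ (1 / r) + s ^ (-(1 / r))) := by
  have hr0 : 0 < r := lt_of_lt_of_le one_pos hr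
  have hx : 0 < s ^ (1 / r) := Real.rpow_pos_of_pos hs _
  have hy : 0 < s ^ (-(1 / r)) := Real.rpow_pos_of_pos hs _
  rw [Real.le_log_iff_exp_le (by positivity)]
  rcases abs_cases (Real.log s) with ⟨h, _⟩ | ⟨h, _⟩
  · have hxe : Real.exp (|Real.log s| / r) = s ^ (1 / r) := by
      rw [h, Real.rpow_def_of_pos hs]
      congr 1; ring
    rw [hxe]; linarith
  · have hxe : Real.exp (|Real.log s| / r) = s ^ (-(1 / r)) := by
      rw [h, Real.rpow_def_of_pos hs]
      congr 1; ring
    rw [hxe]; linarith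

lemma ell_le {r : ℝ} (hr : 1 ≤ r) {s : ℝ} (hs : 0 < s) :
    Real.log (s ^ (1 / r) + s ^ (-(1 / r))) ≤ Real.log 2 + |Real.log s| / r := by
  have hr0 : 0 < r := lt_of_lt_of_le one_pos hr
  have hx : 0 < s ^ (1 / r) := Real.rpow_pos_of_pos hs _
  have hy : 0 < s ^ (-(1 / r)) := Real.rpow_pos_of_pos hs _
  have h1 : s ^ (1 / r) ≤ Real.exp (|Real.log s| / r) := by
    rw [Real.rpow_def_of_pos hs]
    apply Real.exp_le_exp.mpr
    rw [mul_one_div]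
    exact (div_le_div_iff_of_pos_right hr0).mpr (le_abs_self _)
  have h2 : s ^ (-(1 / r)) ≤ Real.exp (|Real.log s| / r) := by
    rw [Real.rpow_def_of_pos hs]
    apply Real.exp_le_exp.mpr
    have : Real.log s * -(1 / r) = -Real.log s / r := by ring
    rw [this]
    exact (div_le_div_iff_of_pos_right hr0).mpr (neg_le_abs _)
  have h3 : s ^ (1 / r) + s ^ (-(1 / r)) ≤ 2 * Real.exp (|Real.log s| / r) := by linarith
  calc Real.log (s ^ (1 / r) + s ^ (-(1 / r)))
      ≤ Real.log (2 * Real.exp (|Real.log s| / r)) := Real.log_le_log (by positivity) h3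
    _ = Real.log 2 + |Real.log s| / r := by
        rw [Real.log_mul two_ne_zero (Real.exp_ne_zero _), Real.log_exp]

lemma loginv_nonneg {r : ℝ} (hr : 1 ≤ r) {s : ℝ} (hs : 0 ≤ s) :
    0 ≤ (Real.log (s ^ (1 / r) + s ^ (-(1 / r))))⁻¹ := by
  have hr0 : 0 < r := lt_of_lt_of_le one_pos hr
  rcases eq_or_lt_of_le hs with h | h
  · have h1 : (1 / r) ≠ 0 := by positivity
    rw [← h, Real.zero_rpow h1, Real.zero_rpow (neg_ne_zero.mpr h1)]
    simp
  · have := ell_ge_log2 hr h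
    have hlog2 : 0 < Real.log 2 := Real.log_pos one_lt_two
    exact inv_nonneg.mpr (by linarith)

lemma fIng_nonneg {r κ : ℝ} (hr : 1 ≤ r) {s : ℝ} (hs : 0 ≤ s) : 0 ≤ fIng r κ s :=
  mul_nonneg (Real.rpow_nonneg hs _) (Real.rpow_nonneg (loginv_nonneg hr hs) _)

lemma fIng_measurable (r κ : ℝ) : Measurable (fIng r κ) := by
  unfold fIng
  measurability

lemma fIng_intervalIntegrable {r κ : ℝ} (hr : 1 ≤ r) (hκ : 0 < κ) {u t : ℝ}
    (hu : 0 ≤ u) (ht : 0 ≤ t) :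
    IntervalIntegrable (fIng r κ) volume u t := by
  have hr' : (0:ℝ) ≤ r := le_trans zero_le_one hr
  have hg : IntervalIntegrable (fun s : ℝ => (Real.log 2)⁻¹ ^ r * s ^ (κ - 1)) volume u t :=
    (intervalIntegral.intervalIntegrable_rpow' (by linarith)).const_mul _
  refine hg.mono_fun' ((fIng_measurable r κ).aestronglyMeasurable.restrict) ?_
  refine (ae_restrict_mem measurableSet_uIoc).mono fun x hxm => ?_
  · have hx : 0 < x := lt_of_le_of_lt (le_min hu ht) hxm.1
    have hlog2 : 0 < Real.log 2 := Real.log_pos one_lt_two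
    have hb : (Real.log (x ^ (1 / r) + x ^ (-(1 / r))))⁻¹ ≤ (Real.log 2)⁻¹ :=
      inv_anti₀ hlog2 (ell_ge_log2 hr hx)
    have hb0 : 0 ≤ (Real.log (x ^ (1 / r) + x ^ (-(1 / r))))⁻¹ := loginv_nonneg hr hx.le
    have : fIng r κ x ≤ (Real.log 2)⁻¹ ^ r * x ^ (κ - 1) := by
      unfold fIng
      rw [mul_comm ((Real.log 2)⁻¹ ^ r) _]
      exact mul_le_mul_of_nonneg_left (Real.rpow_le_rpow hb0 hb hr') (Real.rpow_nonneg hx.le _)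
    calc ‖fIng r κ x‖ = fIng r κ x := by
          rw [Real.norm_eq_abs, abs_of_nonneg (fIng_nonneg hr hx.le)]
      _ ≤ (Real.log 2)⁻¹ ^ r * x ^ (κ - 1) := this

lemma comp_pt {r κ : ℝ} (hr : 1 ≤ r) (hκ : 0 < κ) {s t : ℝ} (ht : 0 < t)
    (h1 : t / 2 ≤ s) (h2 : s ≤ t) :
    min 1 (2 ^ (1 - κ)) * (3:ℝ)⁻¹ ^ r * fIng r κ t ≤ fIng r κ s := by
  have hr0 : 0 < r := lt_of_lt_of_le one_pos hr
  have hs : 0 < s := lt_of_lt_of_le (by linarith) h1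
  have hlog2 : 0 < Real.log 2 := Real.log_pos one_lt_two
  have hℓt1 : Real.log 2 ≤ Real.log (t ^ (1 / r) + t ^ (-(1 / r))) := ell_ge_log2 hr ht
  have hℓt2 : |Real.log t| / r ≤ Real.log (t ^ (1 / r) + t ^ (-(1 / r))) := ell_ge_abs hr ht
  have hℓs_pos : 0 < Real.log (s ^ (1 / r) + s ^ (-(1 / r))) :=
    lt_of_lt_of_le hlog2 (ell_ge_log2 hr hs)
  have habs : |Real.log s| ≤ |Real.log t| + Real.log 2 := by
    have hst : Real.log s ≤ Real.log t := Real.log_le_log hs h2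
    have h3 : Real.log t - Real.log 2 ≤ Real.log s := by
      have h4 := Real.log_le_log (by positivity) h1
      rwa [Real.log_div (ne_of_gt ht) two_ne_zero] at h4
    rw [abs_le]
    constructor
    · have := neg_abs_le (Real.log t); linarith
    · have := le_abs_self (Real.log t); linarith
  have hℓ : Real.log (s ^ (1 / r) + s ^ (-(1 / r)))
      ≤ 3 * Real.log (t ^ (1 / r) + t ^ (-(1 / r))) := by
    have h4 := ell_le hr hs
    have h5 : |Real.log s| / r ≤ (|Real.log t| + Real.log 2) / r :=
      (div_le_div_iff_of_pos_right hr0).mpr habs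
    have h6 : (|Real.log t| + Real.log 2) / r = |Real.log t| / r + Real.log 2 / r := add_div _ _ _
    have h7 : Real.log 2 / r ≤ Real.log 2 := div_le_self hlog2.le hr
    linarith
  have hinv : (3:ℝ)⁻¹ * (Real.log (t ^ (1 / r) + t ^ (-(1 / r))))⁻¹
      ≤ (Real.log (s ^ (1 / r) + s ^ (-(1 / r))))⁻¹ := by
    rw [← mul_inv]
    exact inv_anti₀ hℓs_pos hℓ
  have hℓt_inv_nonneg : 0 ≤ (Real.log (t ^ (1 / r) + t ^ (-(1 / r))))⁻¹ :=
    loginv_nonneg hr ht.le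
  have hinvpow : (3:ℝ)⁻¹ ^ r * (Real.log (t ^ (1 / r) + t ^ (-(1 / r))))⁻¹ ^ r
      ≤ (Real.log (s ^ (1 / r) + s ^ (-(1 / r))))⁻¹ ^ r := by
    rw [← Real.mul_rpow (by norm_num) hℓt_inv_nonneg]
    exact Real.rpow_le_rpow (by positivity) hinv hr0.le
  have hpow : min 1 (2 ^ (1 - κ)) * t ^ (κ - 1) ≤ s ^ (κ - 1) := by
    rcases le_or_gt κ 1 with hk | hk
    · have h8 : t ^ (κ - 1) ≤ s ^ (κ - 1) := Real.rpow_le_rpow_of_nonpos hs h2 (by linarith)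
      calc min 1 (2 ^ (1 - κ)) * t ^ (κ - 1) ≤ 1 * t ^ (κ - 1) :=
            mul_le_mul_of_nonneg_right (min_le_left _ _) (Real.rpow_nonneg ht.le _)
        _ = t ^ (κ - 1) := one_mul _
        _ ≤ s ^ (κ - 1) := h8
    · have h8 : (t / 2) ^ (κ - 1) ≤ s ^ (κ - 1) :=
        Real.rpow_le_rpow (by positivity) h1 (by linarith)
      have h9 : (t / 2) ^ (κ - 1) = 2 ^ (1 - κ) * t ^ (κ - 1) := by
        rw [Real.div_rpow ht.le (by norm_num : (0:ℝ) ≤ 2), div_eq_mul_inv,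
          ← Real.rpow_neg (by norm_num : (0:ℝ) ≤ 2), neg_sub]
        ring
      calc min 1 (2 ^ (1 - κ)) * t ^ (κ - 1) ≤ 2 ^ (1 - κ) * t ^ (κ - 1) :=
            mul_le_mul_of_nonneg_right (min_le_right _ _) (Real.rpow_nonneg ht.le _)
        _ = (t / 2) ^ (κ - 1) := h9.symm
        _ ≤ s ^ (κ - 1) := h8
  have hsnn : 0 ≤ (Real.log (s ^ (1 / r) + s ^ (-(1 / r))))⁻¹ ^ r :=
    Real.rpow_nonneg (loginv_nonneg hr hs.le) _
  have hcnn : 0 ≤ min 1 (2 ^ (1 - κ)) * t ^ (κ - 1) := by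
    apply mul_nonneg _ (Real.rpow_nonneg ht.le _)
    exact le_min zero_le_one (Real.rpow_nonneg (by norm_num) _)
  unfold fIng
  calc min 1 (2 ^ (1 - κ)) * (3:ℝ)⁻¹ ^ r *
        (t ^ (κ - 1) * (Real.log (t ^ (1 / r) + t ^ (-(1 / r))))⁻¹ ^ r)
      = (min 1 (2 ^ (1 - κ)) * t ^ (κ - 1)) *
        ((3:ℝ)⁻¹ ^ r * (Real.log (t ^ (1 / r) + t ^ (-(1 / r))))⁻¹ ^ r) := by ring
    _ ≤ s ^ (κ - 1) * (Real.log (s ^ (1 / r) + s ^ (-(1 / r))))⁻¹ ^ r := by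
        apply mul_le_mul hpow hinvpow _ (Real.rpow_nonneg hs.le _)
        exact mul_nonneg (Real.rpow_nonneg (by norm_num) _)
          (Real.rpow_nonneg hℓt_inv_nonneg _)

lemma cpos {r κ : ℝ} (hr : 1 ≤ r) (hκ : 0 < κ) : 0 < min 1 (2 ^ (1 - κ)) * (3:ℝ)⁻¹ ^ r :=
  mul_pos (lt_min one_pos (Real.rpow_pos_of_pos two_pos _))
    (Real.rpow_pos_of_pos (by norm_num) _)

lemma key {r κ : ℝ} (hr : 1 ≤ r) (hκ : 0 < κ) {u t : ℝ} (hu : 0 ≤ u) (hut : u ≤ t) :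
    (t - u) * fIng r κ t ≤
      (2 / (min 1 (2 ^ (1 - κ)) * (3:ℝ)⁻¹ ^ r)) * ∫ s in u..t, fIng r κ s := by
  set c := min 1 (2 ^ (1 - κ)) * (3:ℝ)⁻¹ ^ r with hc
  have hc0 : 0 < c := cpos hr hκ
  rcases eq_or_lt_of_le hut with rfl | hlt
  · simp
  have ht : 0 < t := lt_of_le_of_lt hu hlt
  set m := max u (t / 2) with hm
  have hm0 : 0 ≤ m := le_trans hu (le_max_left _ _)
  have hmt : m ≤ t := max_le hlt.le (by linarith)
  have hm_half : t / 2 ≤ m := le_max_right _ _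
  have hum : u ≤ m := le_max_left _ _
  have hi1 : IntervalIntegrable (fIng r κ) volume u m := fIng_intervalIntegrable hr hκ hu hm0
  have hi2 : IntervalIntegrable (fIng r κ) volume m t := fIng_intervalIntegrable hr hκ hm0 ht.le
  have h1 : (t - m) * (c * fIng r κ t) ≤ ∫ s in m..t, fIng r κ s := by
    have h1' := intervalIntegral.integral_mono_on hmt
      (intervalIntegrable_const (c := c * fIng r κ t)) hi2
      (fun x hx => comp_pt hr hκ ht (le_trans hm_half hx.1) hx.2)
    rwa [intervalIntegral.integral_const, smul_eq_mul] at h1'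
  have h2 : 0 ≤ ∫ s in u..m, fIng r κ s :=
    intervalIntegral.integral_nonneg hum (fun x hx => fIng_nonneg hr (le_trans hu hx.1))
  have h3 : (∫ s in u..m, fIng r κ s) + ∫ s in m..t, fIng r κ s = ∫ s in u..t, fIng r κ s :=
    intervalIntegral.integral_add_adjacent_intervals hi1 hi2
  have hft : 0 ≤ fIng r κ t := fIng_nonneg hr ht.le
  have h4 : m ≤ (t + u) / 2 := max_le (by linarith) (by linarith)
  have h5 : c * fIng r κ t * ((t - u) / 2) ≤ ∫ s in u..t, fIng r κ s := by
    have h6 : c * fIng r κ t * ((t - u) / 2) ≤ (t - m) * (c * fIng r κ t) := by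
      have := mul_le_mul_of_nonneg_left (show (t - u) / 2 ≤ t - m by linarith)
        (mul_nonneg hc0.le hft)
      linarith [this]
    linarith
  have h7 : (0:ℝ) < 2 / c := by positivity
  calc (t - u) * fIng r κ t = (2 / c) * (c * fIng r κ t * ((t - u) / 2)) := by
        field_simp
    _ ≤ (2 / c) * ∫ s in u..t, fIng r κ s := mul_le_mul_of_nonneg_left h5 h7.le

lemma main_real {r κ : ℝ} (hr : 1 ≤ r) (hκ : 0 < κ) (a : ℕ → ℝ) (ha : ∀ j, 0 ≤ a j)
    (hsum : Summable fun j => a j ^ r) (N : ℕ) :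
    ∑ j ∈ Finset.range N, a j ^ r * fIng r κ (∑ k ∈ Finset.range (j + 1), a k ^ r)
      ≤ (2 / (min 1 (2 ^ (1 - κ)) * (3:ℝ)⁻¹ ^ r)) * Psi r κ (∑' j, a j ^ r) := by
  set C := 2 / (min 1 (2 ^ (1 - κ)) * (3:ℝ)⁻¹ ^ r) with hCdef
  have hC0 : 0 < C := by
    have := cpos (κ := κ) hr hκ
    positivity
  set T : ℕ → ℝ := fun n => ∑ k ∈ Finset.range n, a k ^ r with hT
  have hTnn : ∀ n, 0 ≤ T n := fun n => Finset.sum_nonneg fun i _ => Real.rpow_nonneg (ha i) r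
  have hTd : ∀ j, T (j + 1) - T j = a j ^ r := by
    intro j
    simp [hT, Finset.sum_range_succ]
  have step : ∀ j, a j ^ r * fIng r κ (T (j + 1)) ≤ C * ∫ s in T j..T (j + 1), fIng r κ s := by
    intro j
    have hle : T j ≤ T (j + 1) := by
      have := Real.rpow_nonneg (ha j) r
      have := hTd j
      linarith
    have h := key hr hκ (hTnn j) hle
    rwa [hTd j] at h
  have sum_int : ∑ j ∈ Finset.range N, ∫ s in T j..T (j + 1), fIng r κ s
      = ∫ s in (T 0)..(T N), fIng r κ s :=
    intervalIntegral.sum_integral_adjacent_intervals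
      (fun i _ => fIng_intervalIntegrable hr hκ (hTnn i) (hTnn (i + 1)))
  have hT0 : T 0 = 0 := by simp [hT]
  have hS : T N ≤ ∑' j, a j ^ r :=
    Summable.sum_le_tsum _ (fun i _ => Real.rpow_nonneg (ha i) r) hsum
  have hmono : (∫ s in (0:ℝ)..T N, fIng r κ s)
      ≤ ∫ s in (0:ℝ)..(∑' j, a j ^ r), fIng r κ s := by
    have hSnn : (0:ℝ) ≤ ∑' j, a j ^ r := tsum_nonneg fun i => Real.rpow_nonneg (ha i) r
    have h1 := intervalIntegral.integral_add_adjacent_intervals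
      (fIng_intervalIntegrable hr hκ le_rfl (hTnn N))
      (fIng_intervalIntegrable hr hκ (hTnn N) hSnn)
    have h2 : 0 ≤ ∫ s in T N..(∑' j, a j ^ r), fIng r κ s :=
      intervalIntegral.integral_nonneg hS (fun x hx => fIng_nonneg hr (le_trans (hTnn N) hx.1))
    linarith
  have hPsi : Psi r κ (∑' j, a j ^ r) = ∫ s in (0:ℝ)..(∑' j, a j ^ r), fIng r κ s := rfl
  calc ∑ j ∈ Finset.range N, a j ^ r * fIng r κ (∑ k ∈ Finset.range (j + 1), a k ^ r)
      = ∑ j ∈ Finset.range N, a j ^ r * fIng r κ (T (j + 1)) := rfl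
    _ ≤ ∑ j ∈ Finset.range N, C * ∫ s in T j..T (j + 1), fIng r κ s :=
        Finset.sum_le_sum (fun j _ => step j)
    _ = C * ∑ j ∈ Finset.range N, ∫ s in T j..T (j + 1), fIng r κ s := by
        rw [Finset.mul_sum]
    _ = C * ∫ s in (T 0)..(T N), fIng r κ s := by rw [sum_int]
    _ ≤ C * Psi r κ (∑' j, a j ^ r) := by
        rw [hPsi, hT0]
        exact mul_le_mul_of_nonneg_left hmono hC0.le

lemma phi_nonneg {κ x : ℝ} (hx : 0 < x) : 0 ≤ Phi κ x := by
  unfold Phi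
  apply mul_nonneg (Real.rpow_nonneg hx.le _)
  apply inv_nonneg.mpr
  apply Real.log_nonneg
  rw [one_div]
  linarith [two_le_add_inv hx]

lemma term_eq {r κ : ℝ} (hr : 1 ≤ r) (hκ : 0 < κ) (a : ℕ → ℝ) (ha : ∀ j, 0 ≤ a j) (j : ℕ) :
    (a j * Phi κ ((∑ k ∈ Finset.range (j + 1), a k ^ r) ^ (1 / r))) ^ r
      = a j ^ r * fIng r κ (∑ k ∈ Finset.range (j + 1), a k ^ r) := by
  have hr0 : 0 < r := lt_of_lt_of_le one_pos hr
  have hrne : r ≠ 0 := ne_of_gt hr0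
  rcases eq_or_lt_of_le (ha j) with h0 | h0
  · rw [← h0, zero_mul, Real.zero_rpow hrne, zero_mul]
  · set S := ∑ k ∈ Finset.range (j + 1), a k ^ r with hSdef
    have hS : 0 < S := lt_of_lt_of_le (Real.rpow_pos_of_pos h0 r)
      (Finset.single_le_sum (fun i _ => Real.rpow_nonneg (ha i) r)
        (Finset.self_mem_range_succ j))
    have hx : 0 < S ^ (1 / r) := Real.rpow_pos_of_pos hS _
    have hone : (1:ℝ) / S ^ (1 / r) = S ^ (-(1 / r)) := by
      rw [Real.rpow_neg hS.le, one_div]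
    unfold Phi
    rw [hone]
    have hX : (0:ℝ) ≤ (S ^ (1 / r)) ^ (κ - 1) := Real.rpow_nonneg hx.le _
    have hL : (0:ℝ) ≤ (Real.log (S ^ (1 / r) + S ^ (-(1 / r))))⁻¹ := loginv_nonneg hr hS.le
    rw [Real.mul_rpow (ha j) (mul_nonneg hX hL), Real.mul_rpow hX hL]
    have hXr : ((S ^ (1 / r)) ^ (κ - 1)) ^ r = S ^ (κ - 1) := by
      rw [← Real.rpow_mul hS.le, ← Real.rpow_mul hS.le]
      congr 1
      field_simp
    rw [hXr]
    rfl

/-- for `1 ≤ r < ∞` and `κ > 0` there is `C > 0` such that for every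
non-negative sequence with `∑ a_j^r < ∞`, not identically zero,
`∑_j [a_j Φ_κ((∑_{k≤j} a_k^r)^{1/r})]^r ≤ C Ψ_κ(∑_j a_j^r)`. -/
theorem stmt7 (r κ : ℝ) (hr : 1 ≤ r) (hκ : 0 < κ) :
    ∃ C : ℝ, 0 < C ∧ ∀ a : ℕ → ℝ, (∀ j, 0 ≤ a j) →
      Summable (fun j => a j ^ r) → (∃ j, 0 < a j) →
      ∑' j : ℕ, ENNReal.ofReal
          ((a j * Phi κ ((∑ k ∈ Finset.range (j + 1), a k ^ r) ^ (1 / r))) ^ r) ≤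
        ENNReal.ofReal (C * Psi r κ (∑' j : ℕ, a j ^ r)) := by
  have hc0 : 0 < min 1 (2 ^ (1 - κ)) * (3:ℝ)⁻¹ ^ r := cpos hr hκ
  refine ⟨2 / (min 1 (2 ^ (1 - κ)) * (3:ℝ)⁻¹ ^ r), by positivity, ?_⟩
  intro a ha hsum _
  have hterm : ∀ j, 0 ≤ (a j * Phi κ ((∑ k ∈ Finset.range (j + 1), a k ^ r) ^ (1 / r))) ^ r := by
    intro j
    rcases eq_or_lt_of_le (ha j) with h0 | h0
    · apply Real.rpow_nonneg
      rw [← h0, zero_mul]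
    · have hS : 0 < ∑ k ∈ Finset.range (j + 1), a k ^ r :=
        lt_of_lt_of_le (Real.rpow_pos_of_pos h0 r)
          (Finset.single_le_sum (fun i _ => Real.rpow_nonneg (ha i) r)
            (Finset.self_mem_range_succ j))
      exact Real.rpow_nonneg
        (mul_nonneg (ha j) (phi_nonneg (Real.rpow_pos_of_pos hS (1 / r)))) r
  rw [ENNReal.tsum_eq_iSup_sum]
  apply iSup_le
  intro s
  rw [← ENNReal.ofReal_sum_of_nonneg (fun j _ => hterm j)]
  apply ENNReal.ofReal_le_ofReal
  obtain ⟨N, hN⟩ := s.exists_nat_subset_range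
  calc ∑ j ∈ s, (a j * Phi κ ((∑ k ∈ Finset.range (j + 1), a k ^ r) ^ (1 / r))) ^ r
      ≤ ∑ j ∈ Finset.range N,
          (a j * Phi κ ((∑ k ∈ Finset.range (j + 1), a k ^ r) ^ (1 / r))) ^ r :=
        Finset.sum_le_sum_of_subset_of_nonneg hN (fun j _ _ => hterm j)
    _ = ∑ j ∈ Finset.range N, a j ^ r * fIng r κ (∑ k ∈ Finset.range (j + 1), a k ^ r) :=
        Finset.sum_congr rfl (fun j _ => term_eq hr hκ a ha j)
    _ ≤ (2 / (min 1 (2 ^ (1 - κ)) * (3:ℝ)⁻¹ ^ r)) * Psi r κ (∑' j, a j ^ r) :=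
        main_real hr hκ a ha hsum N
end

section
/- Let $h\in\mathbb{C}\setminus\{0\}$ and $\varepsilon>0$ with $\varepsilon>2|h|$. Then there exists a constant $C_\varepsilon>0$ (depending only on $\varepsilon$) such that $\sup_{0<t\le 1} t^{\varepsilon}\left|\frac{\exp(h\log t)-1}{h\log t}-1\right| \le C_\varepsilon |h|$. -/
/-!
Writing `(exp z - 1) / z - 1 = ∑_{n ≥ 2} z^{n-1} / n!` gives the uniform bound `‖z‖ * exp ‖z‖`.
With `s = -log t > 0` and `z = h log t`, the quantity to estimate is then at most
`‖h‖ * s * exp (-(ε - ‖h‖) s) ≤ ‖h‖ * s * exp (-(ε / 2) s)`, and `s * exp (-a s) ≤ exp (-1) / a`.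
-/

open Real

theorem Complex.norm_exp_sub_one_div_sub_one_le {z : ℂ} (hz : z ≠ 0) :
    ‖(Complex.exp z - 1) / z - 1‖ ≤ ‖z‖ * Real.exp ‖z‖ := by
  have hz' : 0 < ‖z‖ := norm_pos_iff.mpr hz
  have hsum := Complex.norm_exp_sub_sum_le_norm_mul_exp z 2
  simp only [Finset.sum_range_succ, Finset.sum_range_zero, pow_zero, pow_one,
    Nat.factorial_zero, Nat.factorial_one, Nat.cast_one, div_one, zero_add] at hsum
  rw [show (Complex.exp z - 1) / z - 1 = (Complex.exp z - (1 + z)) / z by field_simp; ring,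
    norm_div, div_le_iff₀ hz']
  linarith

theorem Real.mul_exp_neg_mul_le {a : ℝ} (ha : 0 < a) (s : ℝ) :
    s * exp (-(a * s)) ≤ exp (-1) / a := by
  rw [le_div_iff₀ ha]
  linarith [mul_exp_neg_le_exp_neg_one (a * s)]

/-- for `ε > 0` there is `C_ε > 0` (depending only on `ε`) such that for every
`h ∈ ℂ \ {0}` with `ε > 2|h|`,
`sup_{0<t<1} t^ε |((exp(h log t) - 1)/(h log t)) - 1| ≤ C_ε |h|`
(the point `t = 1` contributes `0` by the limit convention). -/
theorem stmt9 (ε : ℝ) (hε : 0 < ε) :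
    ∃ C : ℝ, 0 < C ∧ ∀ h : ℂ, h ≠ 0 → 2 * ‖h‖ < ε →
      ∀ t : ℝ, 0 < t → t < 1 →
        t ^ ε * ‖(Complex.exp (h * (Real.log t : ℂ)) - 1) /
            (h * (Real.log t : ℂ)) - 1‖ ≤ C * ‖h‖ := by
  refine ⟨2 * exp (-1) / ε, by positivity, fun h hh hhε t ht ht1 => ?_⟩
  set s := -log t with hs_def
  have hs : 0 < s := neg_pos.mpr (log_neg ht ht1)
  have ht_pow : t ^ ε = exp (-(ε * s)) := by rw [rpow_def_of_pos ht, hs_def]; ring_nf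
  have hz_norm : ‖h * (log t : ℂ)‖ = ‖h‖ * s := by
    rw [norm_mul, Complex.norm_real, norm_eq_abs, abs_of_neg (log_neg ht ht1)]
  have hz : h * (log t : ℂ) ≠ 0 :=
    mul_ne_zero hh (Complex.ofReal_ne_zero.mpr (log_neg ht ht1).ne)
  calc t ^ ε * ‖(Complex.exp (h * (log t : ℂ)) - 1) / (h * (log t : ℂ)) - 1‖
      ≤ t ^ ε * (‖h‖ * s * exp (‖h‖ * s)) := by
        rw [← hz_norm]; gcongr; exact Complex.norm_exp_sub_one_div_sub_one_le hz
    _ = ‖h‖ * (s * exp (-((ε - ‖h‖) * s))) := by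
        rw [ht_pow, show -((ε - ‖h‖) * s) = -(ε * s) + ‖h‖ * s by ring, exp_add]; ring
    _ ≤ ‖h‖ * (s * exp (-(ε / 2 * s))) := by gcongr; linarith
    _ ≤ ‖h‖ * (exp (-1) / (ε / 2)) := by gcongr; exact mul_exp_neg_mul_le (by positivity) s
    _ = 2 * exp (-1) / ε * ‖h‖ := by field_simp
end
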